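/- (Singular value soft-thresholding solves the nuclear-norm proximal problem.) Let A be a real N×T matrix with singular value decomposition A = U Σ Vᵀ, Σ = diag(σ₁,…,σ_{min(N,T)}), and for ι > 0 define S_ι(A) = U diag(max(σ_s − ι, 0)) Vᵀ. Then S_ι(A) is the unique minimizer over all N×T matrices Z of the objective (1/2)‖Z − A‖_F² + ι‖Z‖_*. -/

import Mathlib

open scoped BigOperators
open Matrix

/-- The singular values of a real `N × T` matrix `A` (indexed by `Fin T`, unordered),
defined as square roots of the eigenvalues of `Aᵀ * A`. -/
noncomputable def svals {N T : ℕ} (A : Matrix (Fin N) (Fin T) ℝ) : Fin T → ℝ :=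
  fun i => Real.sqrt ((show (Aᵀ * A).IsHermitian by
    simpa [Matrix.conjTranspose_eq_transpose_of_trivial] using
      Matrix.isHermitian_conjTranspose_mul_self A).eigenvalues i)

/-- The nuclear norm: sum of singular values. -/
noncomputable def nuclearNorm {N T : ℕ} (A : Matrix (Fin N) (Fin T) ℝ) : ℝ :=
  ∑ i, svals A i

/-- The spectral norm: largest singular value. -/
noncomputable def spectralNormMat {N T : ℕ} (A : Matrix (Fin N) (Fin T) ℝ) : ℝ :=
  ⨆ i, svals A i

/-- The Frobenius norm. -/
noncomputable def frobNorm {N T : ℕ} (A : Matrix (Fin N) (Fin T) ℝ) : ℝ :=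
  Real.sqrt (∑ i, ∑ j, (A i j) ^ 2)

/-- The `s`-th largest singular value (`s = 0` is the largest). -/
noncomputable def svalDesc {N T : ℕ} (A : Matrix (Fin N) (Fin T) ℝ) (s : Fin T) : ℝ :=
  svals A (Tuple.sort (svals A) s.rev)

/-- The projection onto the low-rank space of `Π₀`: `P(Δ) = U₀U₀ᵀ Δ V₀V₀ᵀ`. -/
noncomputable def Pop {N T r : ℕ} (U₀ : Matrix (Fin N) (Fin r) ℝ)
    (V₀ : Matrix (Fin T) (Fin r) ℝ) (Δ : Matrix (Fin N) (Fin T) ℝ) :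
    Matrix (Fin N) (Fin T) ℝ :=
  U₀ * U₀ᵀ * Δ * (V₀ * V₀ᵀ)

/-- The complementary projection `M(Δ) = Δ - P(Δ)`. -/
noncomputable def Mop {N T r : ℕ} (U₀ : Matrix (Fin N) (Fin r) ℝ)
    (V₀ : Matrix (Fin T) (Fin r) ℝ) (Δ : Matrix (Fin N) (Fin T) ℝ) :
    Matrix (Fin N) (Fin T) ℝ :=
  Δ - Pop U₀ V₀ Δ

/-- A rectangular "diagonal" `N × T` matrix with entries `σ` on the main diagonal. -/
noncomputable def rdiag {N T : ℕ} (σ : ℕ → ℝ) : Matrix (Fin N) (Fin T) ℝ :=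
  Matrix.of fun i j => if (i : ℕ) = (j : ℕ) then σ (i : ℕ) else 0

noncomputable def Matrix.PosSemidef.sqrt {n : ℕ} {M : Matrix (Fin n) (Fin n) ℝ} (hM : M.PosSemidef) :
    Matrix (Fin n) (Fin n) ℝ :=
  (hM.1.eigenvectorUnitary : Matrix (Fin n) (Fin n) ℝ) *
    Matrix.diagonal (Real.sqrt ∘ hM.1.eigenvalues) *
    (star hM.1.eigenvectorUnitary : Matrix (Fin n) (Fin n) ℝ)

open scoped MatrixOrder in
lemma Matrix.PosSemidef.sqrt_eq_cfc {n : ℕ} {M : Matrix (Fin n) (Fin n) ℝ} (hM : M.PosSemidef) :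
    hM.sqrt = CFC.sqrt M := by
  rw [CFC.sqrt_eq_cfc, cfc_nnreal_eq_real _ M hM.nonneg, hM.1.cfc_eq]
  simp only [Matrix.IsHermitian.cfc, Unitary.conjStarAlgAut_apply, Matrix.PosSemidef.sqrt]
  congr 3
  funext i
  simp [hM.eigenvalues_nonneg i]

open scoped MatrixOrder in
lemma Matrix.PosSemidef.posSemidef_sqrt {n : ℕ} {M : Matrix (Fin n) (Fin n) ℝ} (hM : M.PosSemidef) :
    hM.sqrt.PosSemidef := by
  rw [hM.sqrt_eq_cfc]; exact Matrix.nonneg_iff_posSemidef.mp (CFC.sqrt_nonneg M)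

open scoped MatrixOrder in
lemma Matrix.PosSemidef.sqrt_mul_self {n : ℕ} {M : Matrix (Fin n) (Fin n) ℝ} (hM : M.PosSemidef) :
    hM.sqrt * hM.sqrt = M := by
  rw [hM.sqrt_eq_cfc]; exact CFC.sqrt_mul_sqrt_self M hM.nonneg

open scoped MatrixOrder in
lemma Matrix.PosSemidef.eq_sqrt_of_sq_eq {n : ℕ} {A B : Matrix (Fin n) (Fin n) ℝ}
    (hA : A.PosSemidef) (hB : B.PosSemidef) (h : A ^ 2 = B) : A = hB.sqrt := by
  rw [hB.sqrt_eq_cfc]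
  exact ((CFC.sqrt_eq_iff B A hB.nonneg hA.nonneg).mpr (by rw [← h, sq])).symm

-- trace of PSD sqrt equals sum of sqrt eigenvalues
lemma trace_sqrt_eq {n : ℕ} {M : Matrix (Fin n) (Fin n) ℝ} (hM : M.PosSemidef) :
    hM.sqrt.trace = ∑ i, Real.sqrt (hM.1.eigenvalues i) := by
  rw [Matrix.PosSemidef.sqrt, Matrix.trace_mul_cycle]
  rw [show (star hM.1.eigenvectorUnitary : Matrix (Fin n) (Fin n) ℝ) *
      (hM.1.eigenvectorUnitary : Matrix (Fin n) (Fin n) ℝ) = 1 from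
    Unitary.coe_star_mul_self _]
  rw [Matrix.one_mul, Matrix.trace_diagonal]
  rfl

lemma psd_tmul {N T : ℕ} (A : Matrix (Fin N) (Fin T) ℝ) : (Aᵀ * A).PosSemidef := by
  have := Matrix.posSemidef_conjTranspose_mul_self A
  rwa [Matrix.conjTranspose_eq_transpose_of_trivial] at this

lemma nuclearNorm_eq_trace_sqrt {N T : ℕ} (A : Matrix (Fin N) (Fin T) ℝ) :
    nuclearNorm A = (psd_tmul A).sqrt.trace := by
  rw [trace_sqrt_eq]
  rfl

lemma sqrt_congr {n : ℕ} {A B : Matrix (Fin n) (Fin n) ℝ} (h : A = B)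
    (hA : A.PosSemidef) (hB : B.PosSemidef) : hA.sqrt = hB.sqrt := by
  subst h; rfl

-- sqrt of conjugation
lemma sqrt_conj {T : ℕ} {M : Matrix (Fin T) (Fin T) ℝ} (hM : M.PosSemidef)
    (Q : Matrix (Fin T) (Fin T) ℝ) (hQ : Qᵀ * Q = 1)
    (h2 : (Q * M * Qᵀ).PosSemidef) :
    h2.sqrt = Q * hM.sqrt * Qᵀ := by
  have hpsd : (Q * hM.sqrt * Qᵀ).PosSemidef := by
    have := hM.posSemidef_sqrt.mul_mul_conjTranspose_same Q
    rwa [Matrix.conjTranspose_eq_transpose_of_trivial] at this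
  refine (hpsd.eq_sqrt_of_sq_eq h2 ?_).symm
  rw [pow_two]
  have : Q * hM.sqrt * Qᵀ * (Q * hM.sqrt * Qᵀ)
      = Q * (hM.sqrt * (Qᵀ * Q) * hM.sqrt) * Qᵀ := by
    simp only [Matrix.mul_assoc]
  rw [this, hQ, Matrix.mul_one, hM.sqrt_mul_self]

-- invariance of nuclear norm
lemma nuclearNorm_conj {N T : ℕ} (W : Matrix (Fin N) (Fin T) ℝ)
    (P : Matrix (Fin N) (Fin N) ℝ) (Q : Matrix (Fin T) (Fin T) ℝ)
    (hP : Pᵀ * P = 1) (hQ : Qᵀ * Q = 1) :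
    nuclearNorm (P * W * Qᵀ) = nuclearNorm W := by
  have key : (P * W * Qᵀ)ᵀ * (P * W * Qᵀ) = Q * (Wᵀ * W) * Qᵀ := by
    rw [Matrix.transpose_mul, Matrix.transpose_mul, Matrix.transpose_transpose]
    have : Q * (Wᵀ * Pᵀ) * (P * W * Qᵀ) = Q * (Wᵀ * ((Pᵀ * P) * W)) * Qᵀ := by
      simp only [Matrix.mul_assoc]
    rw [this, hP, Matrix.one_mul]
  have h2 : (Q * (Wᵀ * W) * Qᵀ).PosSemidef := key ▸ psd_tmul (P * W * Qᵀ)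
  rw [nuclearNorm_eq_trace_sqrt, nuclearNorm_eq_trace_sqrt,
    sqrt_congr key (psd_tmul (P * W * Qᵀ)) h2,
    sqrt_conj (psd_tmul W) Q hQ h2, Matrix.trace_mul_cycle, hQ, Matrix.one_mul]

lemma rdiag_tmul {N T : ℕ} (d : ℕ → ℝ) :
    (rdiag (N:=N) (T:=T) d)ᵀ * rdiag (N:=N) (T:=T) d =
      Matrix.diagonal (fun j : Fin T => if (j:ℕ) < N then d (j:ℕ) ^ 2 else 0) := by
  ext j k
  simp only [Matrix.mul_apply, Matrix.transpose_apply, rdiag, Matrix.of_apply,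
    Matrix.diagonal_apply]
  by_cases hjk : j = k
  · subst hjk
    by_cases hj : (j:ℕ) < N
    · rw [if_pos rfl, Finset.sum_eq_single ⟨(j:ℕ), hj⟩]
      · simp [pow_two, hj]
      · intro i _ hi
        rw [if_neg, mul_zero]
        intro h; exact hi (by apply Fin.ext; exact h)
      · simp
    · rw [if_pos rfl, if_neg hj]
      apply Finset.sum_eq_zero
      intro i _
      rw [if_neg, mul_zero]
      intro h; exact hj (h ▸ i.isLt)
  · rw [if_neg hjk]
    apply Finset.sum_eq_zero
    intro i _
    rcases eq_or_ne ((i:ℕ)) ((j:ℕ)) with h1 | h1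
    · rw [if_pos h1, if_neg (fun h2 => hjk (Fin.ext (h1.symm.trans h2))), mul_zero]
    · rw [if_neg h1, zero_mul]

lemma nuclearNorm_rdiag {N T : ℕ} (d : ℕ → ℝ) (hd : ∀ s, 0 ≤ d s) :
    nuclearNorm (rdiag (N:=N) (T:=T) d) =
      ∑ j : Fin T, (if (j:ℕ) < N then d (j:ℕ) else 0) := by
  rw [nuclearNorm_eq_trace_sqrt]
  set e : Fin T → ℝ := fun j => if (j:ℕ) < N then d (j:ℕ) ^ 2 else 0 with he
  have hpsd : (Matrix.diagonal e).PosSemidef := by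
    refine Matrix.posSemidef_diagonal_iff.mpr fun i => ?_
    by_cases h : (i:ℕ) < N <;> simp [he, h, sq_nonneg]
  have h1 : (psd_tmul (rdiag (N:=N) (T:=T) d)).sqrt = hpsd.sqrt :=
    sqrt_congr (rdiag_tmul d) _ _
  have h2 : hpsd.sqrt = Matrix.diagonal (fun j : Fin T => if (j:ℕ) < N then d (j:ℕ) else 0) := by
    have hpsd2 : (Matrix.diagonal
        (fun j : Fin T => if (j:ℕ) < N then d (j:ℕ) else 0)).PosSemidef := by
      refine Matrix.posSemidef_diagonal_iff.mpr fun i => ?_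
      by_cases h : (i:ℕ) < N <;> simp [h, hd]
    refine (hpsd2.eq_sqrt_of_sq_eq hpsd ?_).symm
    rw [pow_two, Matrix.diagonal_mul_diagonal]
    refine congrArg Matrix.diagonal (funext fun j => ?_)
    by_cases h : (j:ℕ) < N <;> simp [he, h, pow_two]
  rw [h1, h2, Matrix.trace_diagonal]

lemma frobNorm_sq {N T : ℕ} (A : Matrix (Fin N) (Fin T) ℝ) :
    frobNorm A ^ 2 = ∑ i, ∑ j, (A i j) ^ 2 := by
  rw [frobNorm, Real.sq_sqrt]
  exact Finset.sum_nonneg fun i _ => Finset.sum_nonneg fun j _ => sq_nonneg _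

lemma sum_sq_eq_trace {N T : ℕ} (A : Matrix (Fin N) (Fin T) ℝ) :
    ∑ i, ∑ j, (A i j) ^ 2 = (Aᵀ * A).trace := by
  rw [Matrix.trace]
  rw [Finset.sum_comm]
  refine Finset.sum_congr rfl fun j _ => ?_
  simp [Matrix.diag, Matrix.mul_apply, pow_two]

lemma frobNorm_sq_conj {N T : ℕ} (W : Matrix (Fin N) (Fin T) ℝ)
    (P : Matrix (Fin N) (Fin N) ℝ) (Q : Matrix (Fin T) (Fin T) ℝ)
    (hP : Pᵀ * P = 1) (hQ : Qᵀ * Q = 1) :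
    frobNorm (P * W * Qᵀ) ^ 2 = ∑ i, ∑ j, (W i j) ^ 2 := by
  rw [frobNorm_sq, sum_sq_eq_trace, sum_sq_eq_trace]
  have key : (P * W * Qᵀ)ᵀ * (P * W * Qᵀ) = Q * (Wᵀ * W) * Qᵀ := by
    rw [Matrix.transpose_mul, Matrix.transpose_mul, Matrix.transpose_transpose]
    have : Q * (Wᵀ * Pᵀ) * (P * W * Qᵀ) = Q * (Wᵀ * ((Pᵀ * P) * W)) * Qᵀ := by
      simp only [Matrix.mul_assoc]
    rw [this, hP, Matrix.one_mul]
  rw [key, Matrix.trace_mul_cycle, hQ, Matrix.one_mul]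

lemma sum_ite_coe {n : ℕ} (m : ℕ) (c : ℝ) :
    ∑ i : Fin n, (if (i:ℕ) = m then c else 0) = if m < n then c else 0 := by
  by_cases h : m < n
  · rw [if_pos h, Finset.sum_eq_single (⟨m, h⟩ : Fin n)]
    · simp
    · intro i _ hi
      rw [if_neg (fun hc => hi (Fin.ext hc))]
    · simp
  · rw [if_neg h]
    refine Finset.sum_eq_zero fun i _ => if_neg fun hc => h (by rw [← hc]; exact i.isLt)

lemma diag_abs_le_nuclear {N T : ℕ} (W : Matrix (Fin N) (Fin T) ℝ) :
    ∑ j : Fin T, (if h : (j:ℕ) < N then |W ⟨(j:ℕ), h⟩ j| else 0) ≤ nuclearNorm W := by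
  set hH := (psd_tmul W).1 with hHdef
  set E : Matrix (Fin T) (Fin T) ℝ := (hH.eigenvectorUnitary : Matrix (Fin T) (Fin T) ℝ)
    with hEdef
  set μ := hH.eigenvalues with hμdef
  have hstar : (star hH.eigenvectorUnitary : Matrix (Fin T) (Fin T) ℝ) = Eᵀ := by
    rw [hEdef]
    rw [Matrix.star_eq_conjTranspose, Matrix.conjTranspose_eq_transpose_of_trivial]
  have hEtE : Eᵀ * E = 1 := by
    rw [← hstar]; exact Unitary.coe_star_mul_self _
  have hEEt : E * Eᵀ = 1 := mul_eq_one_comm.mp hEtE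
  have hspec : Eᵀ * (Wᵀ * W) * E = Matrix.diagonal μ := by
    have := hH.conjStarAlgAut_star_eigenvectorUnitary
    rw [Unitary.conjStarAlgAut_apply, Unitary.coe_star, star_star] at this
    change _ = Matrix.diagonal hH.eigenvalues at this
    rw [hstar] at this
    convert this using 2
  set B : Matrix (Fin N) (Fin T) ℝ := W * E with hBdef
  have hBtB : Bᵀ * B = Matrix.diagonal μ := by
    rw [hBdef, Matrix.transpose_mul, ← hspec]
    simp only [Matrix.mul_assoc]
  have hBcol : ∀ k, ∑ i, B i k ^ 2 = μ k := by
    intro k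
    have := congrFun (congrFun hBtB k) k
    simp only [Matrix.mul_apply, Matrix.transpose_apply, Matrix.diagonal_apply_eq] at this
    rw [← this]
    exact Finset.sum_congr rfl fun i _ => pow_two _
  have hEcol : ∀ k, ∑ j, E j k ^ 2 = 1 := by
    intro k
    have := congrFun (congrFun hEtE k) k
    simp only [Matrix.mul_apply, Matrix.transpose_apply, Matrix.one_apply_eq] at this
    rw [← this]
    exact Finset.sum_congr rfl fun i _ => pow_two _
  have hμnn : ∀ k, 0 ≤ μ k := fun k => by
    have := (psd_tmul W).eigenvalues_nonneg k
    exact this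
  have hWBE : ∀ i j, W i j = ∑ k, B i k * E j k := by
    intro i j
    have : W = B * Eᵀ := by rw [hBdef, Matrix.mul_assoc, hEEt, Matrix.mul_one]
    conv_lhs => rw [this]
    simp [Matrix.mul_apply]
  -- entrywise bound then swap
  have step1 : ∑ j : Fin T, (if h : (j:ℕ) < N then |W ⟨(j:ℕ), h⟩ j| else 0)
      ≤ ∑ k : Fin T, ∑ j : Fin T,
          (if h : (j:ℕ) < N then |B ⟨(j:ℕ), h⟩ k| * |E j k| else 0) := by
    rw [Finset.sum_comm]
    refine Finset.sum_le_sum fun j _ => ?_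
    by_cases h : (j:ℕ) < N
    · simp only [dif_pos h]
      rw [hWBE]
      refine (Finset.abs_sum_le_sum_abs _ _).trans ?_
      exact le_of_eq (Finset.sum_congr rfl fun k _ => abs_mul _ _)
    · simp [h]
  refine step1.trans (Finset.sum_le_sum fun k _ => ?_)
  -- Cauchy-Schwarz per column k
  set f : Fin T → ℝ := fun j => if h : (j:ℕ) < N then |B ⟨(j:ℕ), h⟩ k| else 0 with hf
  set g : Fin T → ℝ := fun j => |E j k| with hg
  have hfg : ∀ j : Fin T, (if h : (j:ℕ) < N then |B ⟨(j:ℕ), h⟩ k| * |E j k| else 0) = f j * g j := by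
    intro j
    by_cases h : (j:ℕ) < N <;> simp [hf, hg, h]
  have hCS : (∑ j, f j * g j) ^ 2 ≤ (∑ j, f j ^ 2) * (∑ j, g j ^ 2) :=
    Finset.sum_mul_sq_le_sq_mul_sq _ _ _
  have hfsq : ∑ j, f j ^ 2 ≤ μ k := by
    have h1 : ∀ j : Fin T, f j ^ 2 = ∑ i : Fin N, (if (i:ℕ) = (j:ℕ) then f j ^ 2 else 0) := by
      intro j
      rw [sum_ite_coe]
      by_cases h : (j:ℕ) < N
      · rw [if_pos h]
      · rw [if_neg h]; simp [hf, h]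
    calc ∑ j, f j ^ 2
        = ∑ i : Fin N, ∑ j : Fin T, (if (i:ℕ) = (j:ℕ) then f j ^ 2 else 0) := by
          rw [← Finset.sum_comm]
          exact Finset.sum_congr rfl fun j _ => h1 j
      _ ≤ ∑ i : Fin N, B i k ^ 2 := by
          refine Finset.sum_le_sum fun i _ => ?_
          have hc : ∀ j : Fin T, (if (i:ℕ) = (j:ℕ) then f j ^ 2 else 0)
              = (if (j:ℕ) = (i:ℕ) then B i k ^ 2 else 0) := by
            intro j
            by_cases h : (i:ℕ) = (j:ℕ)
            · have hjN : (j:ℕ) < N := lt_of_eq_of_lt h.symm i.isLt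
              have hij : (⟨(j:ℕ), hjN⟩ : Fin N) = i := Fin.ext h.symm
              rw [if_pos h, if_pos h.symm, hf]
              simp only [dif_pos hjN, sq_abs, hij]
            · rw [if_neg h, if_neg (Ne.symm h)]
          rw [Finset.sum_congr rfl (fun j _ => hc j), sum_ite_coe]
          by_cases h : (i:ℕ) < T
          · rw [if_pos h]
          · rw [if_neg h]; exact sq_nonneg _
      _ = μ k := hBcol k
  have hgsq : ∑ j, g j ^ 2 = 1 := by
    rw [← hEcol k]
    exact Finset.sum_congr rfl fun j _ => by simp [hg, sq_abs]
  have hnn : 0 ≤ ∑ j, f j * g j := Finset.sum_nonneg fun j _ =>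
    mul_nonneg (by by_cases h : (j:ℕ) < N <;> simp [hf, h, abs_nonneg]) (abs_nonneg _)
  have : (∑ j, f j * g j) ≤ Real.sqrt (μ k) := by
    have h2 : (∑ j, f j * g j) ^ 2 ≤ μ k := by
      calc (∑ j, f j * g j) ^ 2 ≤ (∑ j, f j ^ 2) * (∑ j, g j ^ 2) := hCS
        _ ≤ μ k * 1 := by
            refine mul_le_mul hfsq (le_of_eq hgsq) ?_ (hμnn k)
            positivity
        _ = μ k := mul_one _
    calc (∑ j, f j * g j) = Real.sqrt ((∑ j, f j * g j) ^ 2) := (Real.sqrt_sq hnn).symm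
      _ ≤ Real.sqrt (μ k) := Real.sqrt_le_sqrt h2
  calc ∑ j : Fin T, (if h : (j:ℕ) < N then |B ⟨(j:ℕ), h⟩ k| * |E j k| else 0)
      = ∑ j, f j * g j := Finset.sum_congr rfl fun j _ => hfg j
    _ ≤ Real.sqrt (μ k) := this
    _ = svals W k := rfl


lemma sum_ite_coe' {n : ℕ} (m : ℕ) (c : Fin n → ℝ) :
    ∑ i : Fin n, (if (i:ℕ) = m then c i else 0) = if h : m < n then c ⟨m, h⟩ else 0 := by
  by_cases h : m < n
  · rw [dif_pos h, Finset.sum_eq_single (⟨m, h⟩ : Fin n)]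
    · simp
    · intro i _ hi
      rw [if_neg (fun hc => hi (Fin.ext hc))]
    · simp
  · rw [dif_neg h]
    refine Finset.sum_eq_zero fun i _ => if_neg fun hc => h (by rw [← hc]; exact i.isLt)

lemma scalar_lt {ι : ℝ} (hι : 0 < ι) (σ0 : ℝ) (hσ0 : 0 ≤ σ0) (x : ℝ)
    (hx : x ≠ max (σ0 - ι) 0) :
    (1/2)*(max (σ0-ι) 0 - σ0)^2 + ι * max (σ0-ι) 0 < (1/2)*(x-σ0)^2 + ι*|x| := by
  rcases le_or_gt (σ0 - ι) 0 with hm | hm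
  · rw [max_eq_right hm] at hx ⊢
    have h1 : 0 < x^2 := by positivity
    rcases abs_cases x with ⟨ha, hb⟩ | ⟨ha, hb⟩ <;> rw [ha] <;> nlinarith
  · rw [max_eq_left hm.le] at hx ⊢
    have h1 : 0 < (x - (σ0 - ι))^2 := by
      have : x - (σ0 - ι) ≠ 0 := sub_ne_zero.mpr hx
      positivity
    rcases abs_cases x with ⟨ha, hb⟩ | ⟨ha, hb⟩ <;> rw [ha]
    · nlinarith
    · nlinarith [mul_pos hι (neg_pos.mpr hb)]

lemma scalar_le {ι : ℝ} (hι : 0 < ι) (σ0 : ℝ) (hσ0 : 0 ≤ σ0) (x : ℝ) :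
    (1/2)*(max (σ0-ι) 0 - σ0)^2 + ι * max (σ0-ι) 0 ≤ (1/2)*(x-σ0)^2 + ι*|x| := by
  rcases eq_or_ne x (max (σ0-ι) 0) with rfl | hx
  · rw [abs_of_nonneg (le_max_right _ _)]
  · exact (scalar_lt hι σ0 hσ0 x hx).le


set_option maxHeartbeats 2000000 in
/-- singular value soft-thresholding is the unique minimizer of
`Z ↦ (1/2)‖Z − A‖_F² + ι‖Z‖_*`. -/
theorem stmt8 {N T : ℕ} (A : Matrix (Fin N) (Fin T) ℝ)
    (U : Matrix (Fin N) (Fin N) ℝ) (V : Matrix (Fin T) (Fin T) ℝ) (σ : ℕ → ℝ)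
    (hU : Uᵀ * U = 1) (hV : Vᵀ * V = 1) (hσ : ∀ s, 0 ≤ σ s)
    (hSVD : A = U * rdiag (N:=N) (T:=T) σ * Vᵀ)
    (ι : ℝ) (hι : 0 < ι) :
    ∀ Z : Matrix (Fin N) (Fin T) ℝ,
      Z ≠ U * rdiag (N:=N) (T:=T) (fun s => max (σ s - ι) 0) * Vᵀ →
      (1 / 2) * frobNorm (U * rdiag (N:=N) (T:=T) (fun s => max (σ s - ι) 0) * Vᵀ - A) ^ 2 +
          ι * nuclearNorm (U * rdiag (N:=N) (T:=T) (fun s => max (σ s - ι) 0) * Vᵀ) <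
        (1 / 2) * frobNorm (Z - A) ^ 2 + ι * nuclearNorm Z := by
  intro Z hZ
  have hUUt : U * Uᵀ = 1 := mul_eq_one_comm.mp hU
  have hVVt : V * Vᵀ = 1 := mul_eq_one_comm.mp hV
  set msoft : ℕ → ℝ := fun s => max (σ s - ι) 0 with hmsoft
  set D : Matrix (Fin N) (Fin T) ℝ := rdiag (N:=N) (T:=T) σ with hD
  set D' : Matrix (Fin N) (Fin T) ℝ := rdiag (N:=N) (T:=T) msoft with hD'
  set W : Matrix (Fin N) (Fin T) ℝ := Uᵀ * Z * V with hWdef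
  have hZW : Z = U * W * Vᵀ := by
    rw [hWdef]
    have : U * (Uᵀ * Z * V) * Vᵀ = (U * Uᵀ) * Z * (V * Vᵀ) := by
      simp only [Matrix.mul_assoc]
    rw [this, hUUt, hVVt, Matrix.one_mul, Matrix.mul_one]
  have hWne : W ≠ D' := fun h => hZ (by rw [hZW, h])
  have hZA : Z - A = U * (W - D) * Vᵀ := by
    rw [hZW, hSVD, ← Matrix.sub_mul, ← Matrix.mul_sub]
  have hZhatA : U * D' * Vᵀ - A = U * (D' - D) * Vᵀ := by
    rw [hSVD, ← Matrix.sub_mul, ← Matrix.mul_sub]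
  have hf1 : frobNorm (Z - A) ^ 2 = ∑ i, ∑ j, ((W - D) i j) ^ 2 := by
    rw [hZA]; exact frobNorm_sq_conj _ U V hU hV
  have hf2 : frobNorm (U * D' * Vᵀ - A) ^ 2 = ∑ i, ∑ j, ((D' - D) i j) ^ 2 := by
    rw [hZhatA]; exact frobNorm_sq_conj _ U V hU hV
  have hmnn : ∀ s, 0 ≤ msoft s := fun s => le_max_right _ _
  have hn1 : nuclearNorm Z = nuclearNorm W := by
    rw [hZW]; exact nuclearNorm_conj _ U V hU hV
  have hn2 : nuclearNorm (U * D' * Vᵀ) = ∑ j : Fin T, (if (j:ℕ) < N then msoft (j:ℕ) else 0) := by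
    rw [hD', nuclearNorm_conj _ U V hU hV, nuclearNorm_rdiag msoft hmnn]
  set φ : Fin N → Fin T → ℝ → ℝ := fun i j x =>
    (1/2)*(x - D i j)^2 + (if (i:ℕ) = (j:ℕ) then ι * |x| else 0) with hφ
  -- expansion of the entrywise lower bound
  have expand : ∀ X : Matrix (Fin N) (Fin T) ℝ,
      (1/2) * (∑ i, ∑ j, ((X - D) i j) ^ 2)
        + ι * (∑ j : Fin T, (if h : (j:ℕ) < N then |X ⟨(j:ℕ), h⟩ j| else 0))
      = ∑ i, ∑ j, φ i j (X i j) := by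
    intro X
    have h2 : ι * (∑ j : Fin T, (if h : (j:ℕ) < N then |X ⟨(j:ℕ), h⟩ j| else 0))
        = ∑ i : Fin N, ∑ j : Fin T, (if (i:ℕ) = (j:ℕ) then ι * |X i j| else 0) := by
      rw [Finset.sum_comm, Finset.mul_sum]
      refine Finset.sum_congr rfl fun j _ => ?_
      rw [sum_ite_coe' (n := N) (j:ℕ) (fun i => ι * |X i j|)]
      by_cases h : (j:ℕ) < N
      · rw [dif_pos h, dif_pos h]
      · rw [dif_neg h, dif_neg h, mul_zero]
    rw [h2, Finset.mul_sum, ← Finset.sum_add_distrib]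
    refine Finset.sum_congr rfl fun i _ => ?_
    rw [Finset.mul_sum, ← Finset.sum_add_distrib]
    refine Finset.sum_congr rfl fun j _ => ?_
    simp only [hφ, Matrix.sub_apply]
  -- pointwise comparison
  have hDij : ∀ (i : Fin N) (j : Fin T), D i j = if (i:ℕ) = (j:ℕ) then σ (i:ℕ) else 0 :=
    fun i j => rfl
  have hD'ij : ∀ (i : Fin N) (j : Fin T), D' i j = if (i:ℕ) = (j:ℕ) then msoft (i:ℕ) else 0 :=
    fun i j => rfl
  have keyle : ∀ (i : Fin N) (j : Fin T) (x : ℝ), φ i j (D' i j) ≤ φ i j x := by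
    intro i j x
    by_cases h : (i:ℕ) = (j:ℕ)
    · simp only [hφ, hDij, hD'ij, if_pos h]
      have := scalar_le hι (σ (i:ℕ)) (hσ _) x
      rw [abs_of_nonneg (hmnn (i:ℕ))] at *
      simpa [hmsoft] using this
    · simp only [hφ, hDij, hD'ij, if_neg h]
      simp only [sub_zero, add_zero]
      nlinarith [sq_nonneg x]
  have keylt : ∀ (i : Fin N) (j : Fin T) (x : ℝ), x ≠ D' i j → φ i j (D' i j) < φ i j x := by
    intro i j x hx
    by_cases h : (i:ℕ) = (j:ℕ)
    · simp only [hφ, hDij, hD'ij, if_pos h]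
      rw [hD'ij, if_pos h] at hx
      have := scalar_lt hι (σ (i:ℕ)) (hσ _) x (by simpa [hmsoft] using hx)
      rw [abs_of_nonneg (hmnn (i:ℕ))]
      simpa [hmsoft] using this
    · simp only [hφ, hDij, hD'ij, if_neg h]
      rw [hD'ij, if_neg h] at hx
      simp only [sub_zero, add_zero]
      have : 0 < x ^ 2 := by positivity
      nlinarith
  -- strict sum comparison
  have hexists : ∃ p : Fin N × Fin T, W p.1 p.2 ≠ D' p.1 p.2 := by
    by_contra hcon
    push_neg at hcon
    exact hWne (by ext i j; exact hcon ⟨i, j⟩)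
  have hstrict : ∑ i, ∑ j, φ i j (D' i j) < ∑ i, ∑ j, φ i j (W i j) := by
    rw [← Fintype.sum_prod_type (f := fun p : Fin N × Fin T => φ p.1 p.2 (D' p.1 p.2)),
      ← Fintype.sum_prod_type (f := fun p : Fin N × Fin T => φ p.1 p.2 (W p.1 p.2))]
    refine Finset.sum_lt_sum (fun p _ => keyle p.1 p.2 _) ?_
    obtain ⟨p, hp⟩ := hexists
    exact ⟨p, Finset.mem_univ p, keylt p.1 p.2 _ hp⟩
  -- diagonal of D'
  have hdiagD' : ∑ j : Fin T, (if h : (j:ℕ) < N then |D' ⟨(j:ℕ), h⟩ j| else 0)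
      = ∑ j : Fin T, (if (j:ℕ) < N then msoft (j:ℕ) else 0) := by
    refine Finset.sum_congr rfl fun j _ => ?_
    by_cases h : (j:ℕ) < N
    · rw [dif_pos h, if_pos h, hD'ij, if_pos rfl, abs_of_nonneg (hmnn _)]
    · rw [dif_neg h, if_neg h]
  calc (1 / 2) * frobNorm (U * D' * Vᵀ - A) ^ 2 + ι * nuclearNorm (U * D' * Vᵀ)
      = (1/2) * (∑ i, ∑ j, ((D' - D) i j) ^ 2)
          + ι * (∑ j : Fin T, (if h : (j:ℕ) < N then |D' ⟨(j:ℕ), h⟩ j| else 0)) := by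
        rw [hf2, hn2, hdiagD']
    _ = ∑ i, ∑ j, φ i j (D' i j) := expand D'
    _ < ∑ i, ∑ j, φ i j (W i j) := hstrict
    _ = (1/2) * (∑ i, ∑ j, ((W - D) i j) ^ 2)
          + ι * (∑ j : Fin T, (if h : (j:ℕ) < N then |W ⟨(j:ℕ), h⟩ j| else 0)) := (expand W).symm
    _ ≤ (1/2) * (∑ i, ∑ j, ((W - D) i j) ^ 2) + ι * nuclearNorm W := by
        have := diag_abs_le_nuclear W
        nlinarith
    _ = (1 / 2) * frobNorm (Z - A) ^ 2 + ι * nuclearNorm Z := by rw [hf1, hn1]
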